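/- Let Δx > 0, Δt > 0, m₀ ∈ ℤ, and let a, b : ℕ → ℤ → ℝ be grid coefficients with |a(n,j)| ≤ A and |b(n,j)| ≤ B for all n ∈ ℕ, j ∈ ℤ, and suppose the CFL condition A·Δt/Δx ≤ 1 holds. If U : ℕ → ℤ → ℝ satisfies the Lax-Friedrichs delay scheme and M ≥ 0 is such that |U(0,j)| ≤ M for all j ∈ ℤ, then for every n ∈ ℕ and every j ∈ ℤ one has |U(n,j)| ≤ (1 + B·Δt)^n·M ≤ exp(B·n·Δt)·M. In particular, on any finite time interval [0, t_f] (i.e. for n·Δt ≤ t_f), |U(n,j)| ≤ exp(B·t_f)·M, so the scheme is stable in the maximum norm with stability constant of the form 1 + O(Δt) per step. -/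

import Mathlib

/-!
Under the CFL condition the Courant number `c = a Δt / (2Δx)` satisfies `|c| ≤ 1/2`, so the
Lax-Friedrichs part of the update `(1/2 - c) U(j+1) + (1/2 + c) U(j-1)` is a convex combination
and does not increase the maximum norm; the delay term adds at most `B Δt` times it. Hence the
maximum norm grows by at most the factor `1 + B Δt ≤ exp (B Δt)` per time step.
-/

theorem abs_courantNumber_le_half {a A Δt Δx : ℝ} (hΔx : 0 < Δx) (hΔt : 0 ≤ Δt)
    (ha : |a| ≤ A) (hCFL : A * Δt / Δx ≤ 1) :
    |a * Δt / (2 * Δx)| ≤ 1 / 2 := by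
  have hAΔt : A * Δt ≤ Δx := (div_le_one hΔx).mp hCFL
  rw [abs_div, abs_mul, abs_of_nonneg hΔt, abs_of_pos (by positivity : (0 : ℝ) < 2 * Δx),
    div_le_iff₀ (by positivity)]
  linarith [mul_le_mul_of_nonneg_right ha hΔt]

theorem abs_laxFriedrichs_update_le {c β Δt B K uᵣ uₗ w : ℝ} (hc : |c| ≤ 1 / 2)
    (hΔt : 0 ≤ Δt) (hβ : |β| ≤ B) (hr : |uᵣ| ≤ K) (hl : |uₗ| ≤ K) (hw : |w| ≤ K) :
    |(1 / 2) * (uᵣ + uₗ) - c * (uᵣ - uₗ) + Δt * β * w| ≤ (1 + B * Δt) * K := by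
  obtain ⟨hc₁, hc₂⟩ := abs_le.mp hc
  have hconvex : (1 / 2) * (uᵣ + uₗ) - c * (uᵣ - uₗ) = (1 / 2 - c) * uᵣ + (1 / 2 + c) * uₗ := by
    ring
  have hdelay : |Δt * β * w| ≤ Δt * B * K := by
    rw [abs_mul, abs_mul, abs_of_nonneg hΔt, mul_assoc, mul_assoc]
    exact mul_le_mul_of_nonneg_left (mul_le_mul hβ hw (abs_nonneg _) ((abs_nonneg _).trans hβ)) hΔt
  calc |(1 / 2) * (uᵣ + uₗ) - c * (uᵣ - uₗ) + Δt * β * w|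
      ≤ |(1 / 2 - c) * uᵣ| + |(1 / 2 + c) * uₗ| + |Δt * β * w| := by
        rw [hconvex]
        exact (abs_add_le _ _).trans (add_le_add_left (abs_add_le _ _) _)
    _ ≤ (1 / 2 - c) * K + (1 / 2 + c) * K + Δt * B * K := by
        rw [abs_mul, abs_mul, abs_of_nonneg (by linarith : 0 ≤ 1 / 2 - c),
          abs_of_nonneg (by linarith : 0 ≤ 1 / 2 + c)]
        exact add_le_add (add_le_add (mul_le_mul_of_nonneg_left hr (by linarith))
          (mul_le_mul_of_nonneg_left hl (by linarith))) hdelay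
    _ = (1 + B * Δt) * K := by ring

theorem one_add_pow_le_exp_mul {x : ℝ} (hx : 0 ≤ 1 + x) (n : ℕ) :
    (1 + x) ^ n ≤ Real.exp (n * x) := by
  rw [Real.exp_nat_mul]
  exact pow_le_pow_left₀ hx (by linarith [Real.add_one_le_exp x]) n

/-- Maximum-norm stability on a finite time interval of the Lax-Friedrichs
approximation of the hyperbolic PDE with point-wise delay:
`|U n j| ≤ (1 + BΔt)^n M ≤ exp(B n Δt) M ≤ exp(B t_f) M` whenever `n Δt ≤ t_f`. -/
theorem laxFriedrichs_delay_stability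
    (Δx Δt A B : ℝ) (hΔx : 0 < Δx) (hΔt : 0 < Δt) (m₀ : ℤ)
    (a b : ℕ → ℤ → ℝ)
    (ha : ∀ n j, |a n j| ≤ A) (hb : ∀ n j, |b n j| ≤ B)
    (hCFL : A * Δt / Δx ≤ 1)
    (U : ℕ → ℤ → ℝ)
    (hU : ∀ n j, U (n + 1) j =
      (1 / 2) * (U n (j + 1) + U n (j - 1))
        - (a n j * Δt / (2 * Δx)) * (U n (j + 1) - U n (j - 1))
        + Δt * b n j * U n (j - m₀))
    (M : ℝ) (hM : 0 ≤ M) (hM0 : ∀ j, |U 0 j| ≤ M) :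
    ∀ (n : ℕ) (j : ℤ),
      |U n j| ≤ (1 + B * Δt) ^ n * M ∧
      (1 + B * Δt) ^ n * M ≤ Real.exp (B * n * Δt) * M ∧
      ∀ t_f : ℝ, n * Δt ≤ t_f → |U n j| ≤ Real.exp (B * t_f) * M := by
  have hB : 0 ≤ B := (abs_nonneg _).trans (hb 0 0)
  have hbound : ∀ n j, |U n j| ≤ (1 + B * Δt) ^ n * M := by
    intro n
    induction n with
    | zero => simpa using hM0
    | succ n ih =>
      intro j
      rw [hU]
      exact (abs_laxFriedrichs_update_le (abs_courantNumber_le_half hΔx hΔt.le (ha n j) hCFL)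
        hΔt.le (hb n j) (ih _) (ih _) (ih _)).trans_eq (by ring)
  intro n j
  have hexp : (1 + B * Δt) ^ n * M ≤ Real.exp (B * n * Δt) * M := by
    refine mul_le_mul_of_nonneg_right ((one_add_pow_le_exp_mul (by positivity) n).trans_eq ?_) hM
    ring_nf
  refine ⟨hbound n j, hexp, fun t_f ht => (hbound n j).trans (hexp.trans ?_)⟩
  gcongr ?_ * M
  exact Real.exp_le_exp.mpr (by linear_combination mul_le_mul_of_nonneg_left ht hB)
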